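/- arXiv:2202.13235 — 8 statements merged into one kernel-verified Lean document; each statement's English description precedes it below -/
import Mathlib

section
/- For all permutations σ and τ of {1,…,k}, if the strings L_1 = mdolBWT(M,σ) and L_2 = mdolBWT(M,τ) differ at a position p (i.e., L_1[p] ≠ L_2[p]), then p belongs to some interesting interval [b,e] of M, i.e., b ≤ p ≤ e. -/
/-- The `j`-th rotation of a string. -/
def rot {β : Type*} (l : List β) (j : ℕ) : List β := l.drop j ++ l.take j

/-- Nonstrict lexicographic order on strings. -/
def listLe {β : Type*} [LT β] (X Y : List β) : Prop := X = Y ∨ List.Lex (· < ·) X Y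

/-- `T·$`, over the alphabet extended with a sentinel `⊥` smaller than every symbol. -/
def dstr {α : Type*} (T : List α) : List (WithBot α) :=
  (T.map (fun a => (a : WithBot α))) ++ [⊥]

/-- The multiset (list) of all rotations of the strings `T_i·$`. -/
def dolRots {α : Type*} {k : ℕ} (T : Fin k → List α) : List (List (WithBot α)) :=
  (List.finRange k).flatMap fun i =>
    (List.range (dstr (T i)).length).map (rot (dstr (T i)))

/-- The character preceding the suffix `U` in `Ti`: the last character of `W` where
`Ti = W·U`, and the sentinel `⊥` (i.e. `$`) if `U = Ti`. -/
def precChar {α : Type*} (Ti U : List α) : WithBot α :=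
  match (Ti.take (Ti.length - U.length)).getLast? with
  | none => ⊥
  | some a => (a : WithBot α)

/-- `U` defines an interesting interval: `U` is a suffix of two different input strings
and the characters preceding these two occurrences differ. -/
def Interesting {α : Type*} {k : ℕ} (T : Fin k → List α) (U : List α) : Prop :=
  ∃ i j : Fin k, i ≠ j ∧ U <:+ T i ∧ U <:+ T j ∧ precChar (T i) U ≠ precChar (T j) U

/-- The set of ranks, in the lexicographically sorted list `L0` of rotations of the
`T_i·$`, of the rotations beginning with `U·$`. -/
def rankSet {α : Type*} (L0 : List (List (WithBot α))) (U : List α) : Set ℕ :=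
  {p | ∃ R, L0[p]? = some R ∧ dstr U <+: R}

/-- The string `W_σ = T_{σ(1)}$_1 T_{σ(2)}$_2 ⋯ T_{σ(k)}$_k` over the alphabet
`Fin k ⊕ₗ α` (separators `toLex (Sum.inl p)` are pairwise distinct, increasing, and
smaller than every symbol of `Σ`). -/
def mWord {α : Type*} {k : ℕ} (T : Fin k → List α) (σ : Equiv.Perm (Fin k)) :
    List (Fin k ⊕ₗ α) :=
  (List.finRange k).flatMap fun p =>
    ((T (σ p)).map fun a => toLex (Sum.inr a)) ++ [toLex (Sum.inl p)]

/-- The multiset (list) of all rotations of `W_σ`. -/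
def mRots {α : Type*} {k : ℕ} (T : Fin k → List α) (σ : Equiv.Perm (Fin k)) :
    List (List (Fin k ⊕ₗ α)) :=
  (List.range (mWord T σ).length).map (rot (mWord T σ))

/-- The last character of a rotation, with every separator replaced by the single
sentinel `$` (here `⊥`). -/
def lastOut {α : Type*} {k : ℕ} (R : List (Fin k ⊕ₗ α)) : WithBot α :=
  match R.getLast? with
  | none => ⊥
  | some b => match ofLex b with
    | Sum.inl _ => ⊥
    | Sum.inr a => (a : WithBot α)

/-- The multidollar BWT read off from a lexicographically sorted list `L` of the
rotations of `W_σ`. -/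
def mdolOf {α : Type*} {k : ℕ} (L : List (List (Fin k ⊕ₗ α))) : List (WithBot α) :=
  L.map lastOut


/-!
Give every rotation a key: the string of letters before its first separator. Keys are monotone
for the lexicographic order, so the keys of a sorted list of rotations are sorted too. The keys of
the rotations of `W_σ`, of `W_τ` and of the `T_i·$` form the same multiset (each suffix of each
`T_i`, once), hence the three sorted lists carry the same key at every rank. At rank `p` the
rotations of `W_σ` and `W_τ` thus share a key `U`, a suffix of some `T_i` and of some `T_j`, and
their last symbols are the characters preceding `U` in `T_i` and in `T_j`. If these differ, then
`i ≠ j`, so `U` is interesting, and the rotation of rank `p` of the `T_i·$` begins with `U·$`.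
-/

section Keys

variable {β β' γ : Type*}

-- `f` reads a symbol either as a letter `a` (`some a`) or as a separator (`none`).
def prefixBeforeSep (f : β → Option γ) : List β → List γ
  | [] => []
  | x :: l => match f x with
    | none => []
    | some a => a :: prefixBeforeSep f l

theorem prefixBeforeSep_map_append {f : β → Option γ} {e : γ → β} (he : ∀ a, f (e a) = some a)
    {s : β} (hs : f s = none) (X : List γ) (Y : List β) :
    prefixBeforeSep f (X.map e ++ s :: Y) = X := by
  induction X with
  | nil => simp [prefixBeforeSep, hs]
  | cons a X ih => simp [prefixBeforeSep, he, ih]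

theorem listLe_nil_left [LT β] (X : List β) : listLe [] X := by
  cases X
  · exact Or.inl rfl
  · exact Or.inr List.Lex.nil

theorem listLe_antisymm [LinearOrder β] {X Y : List β} (hXY : listLe X Y) (hYX : listLe Y X) :
    X = Y := by
  rcases hXY with rfl | hXY
  · rfl
  rcases hYX with rfl | hYX
  · rfl
  exact absurd hYX (asymm hXY)

def SepMonotone [LT β] [LT γ] (f : β → Option γ) : Prop :=
  ∀ ⦃x y : β⦄, x < y → ∀ a ∈ f x, ∃ b ∈ f y, a < b

theorem prefixBeforeSep_mono [LT β] [LT γ] {f : β → Option γ} (hf : SepMonotone f)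
    {R R' : List β} (h : listLe R R') : listLe (prefixBeforeSep f R) (prefixBeforeSep f R') := by
  rcases h with rfl | h
  · exact Or.inl rfl
  induction h with
  | nil => exact listLe_nil_left _
  | @cons x l l' _ ih =>
    simp only [prefixBeforeSep]
    rcases f x with _ | a
    · exact Or.inl rfl
    · rcases ih with ih | ih
      · exact Or.inl (ih ▸ rfl)
      · exact Or.inr (.cons ih)
  | @rel x l y l' hxy =>
    simp only [prefixBeforeSep]
    rcases hx : f x with _ | a
    · exact listLe_nil_left _
    · obtain ⟨b, hb, hab⟩ := hf hxy a hx
      rw [Option.mem_def.mp hb]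
      exact Or.inr (.rel hab)

theorem map_eq_of_pairwise_listLe [LT β] [LT β'] [LinearOrder γ]
    {f : β → Option γ} {f' : β' → Option γ} (hf : SepMonotone f) (hf' : SepMonotone f')
    {L : List (List β)} {L' : List (List β')} (hL : L.Pairwise listLe) (hL' : L'.Pairwise listLe)
    (h : (L.map (prefixBeforeSep f)).Perm (L'.map (prefixBeforeSep f'))) :
    L.map (prefixBeforeSep f) = L'.map (prefixBeforeSep f') :=
  h.eq_of_pairwise (fun _ _ _ _ => listLe_antisymm)
    (hL.map _ fun _ _ => prefixBeforeSep_mono hf) (hL'.map _ fun _ _ => prefixBeforeSep_mono hf')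

end Keys

theorem exists_getElem?_of_map_eq_of_map_ne {β γ δ : Type*} {f : β → γ} {g : β → δ}
    {L L' : List β} (hf : L.map f = L'.map f) {p : ℕ} (hg : (L.map g)[p]? ≠ (L'.map g)[p]?) :
    ∃ R R', L[p]? = some R ∧ L'[p]? = some R' ∧ f R = f R' ∧ g R ≠ g R' := by
  have hfp := congrArg (·[p]?) hf
  simp only [List.getElem?_map] at hfp hg
  rcases hR : L[p]? with _ | R <;> rcases hR' : L'[p]? with _ | R' <;> simp_all

theorem rot_zero {β : Type*} (l : List β) : rot l 0 = l := by simp [rot]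

theorem rot_append_length_add {β : Type*} (A B : List β) {o : ℕ} (ho : o ≤ B.length) :
    rot (A ++ B) (A.length + o) = rot (B ++ A) o := by
  simp [rot, List.drop_append, List.take_append, ho, List.drop_eq_nil_of_le,
    List.take_of_length_le]

section MultidollarRotations

variable {α : Type*} {k : ℕ}

def letterOf (x : Fin k ⊕ₗ α) : Option α := (ofLex x).getRight?

theorem sepMonotone_letterOf [LT α] : SepMonotone (letterOf (α := α) (k := k)) := by
  intro x y hxy a hx
  obtain rfl : x = toLex (Sum.inr a) := Sum.getRight?_eq_some_iff.mp hx
  rcases hy : ofLex y with q | b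
  · obtain rfl : y = toLex (Sum.inl q) := congrArg toLex hy
    exact absurd hxy Sum.Lex.not_inr_lt_inl
  · obtain rfl : y = toLex (Sum.inr b) := congrArg toLex hy
    exact ⟨b, rfl, Sum.Lex.inr_lt_inr_iff.mp hxy⟩

def mKey : List (Fin k ⊕ₗ α) → List α := prefixBeforeSep letterOf

theorem mKey_map_append (X : List α) (q : Fin k) (Y : List (Fin k ⊕ₗ α)) :
    mKey ((X.map fun a => toLex (Sum.inr a)) ++ toLex (Sum.inl q) :: Y) = X :=
  prefixBeforeSep_map_append (f := letterOf) (e := fun a => toLex (Sum.inr a)) (fun _ => rfl) rfl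
    X Y

def block (S : List α) (q : Fin k) : List (Fin k ⊕ₗ α) :=
  (S.map fun a => toLex (Sum.inr a)) ++ [toLex (Sum.inl q)]

def blocks (bs : List (List α × Fin k)) : List (Fin k ⊕ₗ α) :=
  bs.flatMap fun b => block b.1 b.2

theorem blocks_cons (S : List α) (q : Fin k) (bs : List (List α × Fin k)) :
    blocks ((S, q) :: bs) = block S q ++ blocks bs := rfl

theorem blocks_append (bs cs : List (List α × Fin k)) :
    blocks (bs ++ cs) = blocks bs ++ blocks cs := List.flatMap_append

theorem mWord_eq_blocks (T : Fin k → List α) (σ : Equiv.Perm (Fin k)) :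
    mWord T σ = blocks ((List.finRange k).map fun p => (T (σ p), p)) := by
  simp [mWord, blocks, block, List.flatMap_map]

theorem lastOut_blocks {bs : List (List α × Fin k)} (hbs : bs ≠ []) :
    lastOut (blocks bs) = ⊥ := by
  obtain ⟨bs, ⟨S, q⟩, rfl⟩ := (List.eq_nil_or_concat' bs).resolve_left hbs
  simp [blocks, block, lastOut]

theorem lastOut_append_map_inr (Z : List (Fin k ⊕ₗ α)) {X : List α} (hX : X ≠ []) :
    lastOut (Z ++ X.map fun a => toLex (Sum.inr a)) = X.getLast hX := by
  simp [lastOut, List.getLast?_append, List.getLast?_eq_some_getLast hX]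

theorem precChar_drop {S : List α} {o : ℕ} (ho : o ≤ S.length) (h0 : o ≠ 0) :
    precChar S (S.drop o) = (S.take o).getLast (List.ne_nil_of_length_pos (by simp; omega)) := by
  have : S.length - (S.length - o) = o := by omega
  simp only [precChar, List.length_drop, this]
  rw [List.getLast?_eq_some_getLast]

theorem rot_block_append (S : List α) (q : Fin k) (C : List (Fin k ⊕ₗ α)) {o : ℕ}
    (ho : o ≤ S.length) :
    rot (block S q ++ C) o =
      ((S.drop o).map fun a => toLex (Sum.inr a)) ++ toLex (Sum.inl q) ::
        (C ++ (S.take o).map fun a => toLex (Sum.inr a)) := by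
  simp [rot, block, List.drop_append, List.take_append, ho, List.map_drop, List.map_take]

def keyLast (R : List (Fin k ⊕ₗ α)) : List α × WithBot α := (mKey R, lastOut R)

def suffixesWithPrec (S : List α) : List (List α × WithBot α) :=
  (List.range (S.length + 1)).map fun o => (S.drop o, precChar S (S.drop o))

theorem keyLast_rot_block_append {S : List α} {q : Fin k} {C : List (Fin k ⊕ₗ α)} {o : ℕ}
    (ho : o ≤ S.length) (hC : lastOut (block S q ++ C) = ⊥) :
    keyLast (rot (block S q ++ C) o) = (S.drop o, precChar S (S.drop o)) := by
  refine Prod.ext (by rw [keyLast, rot_block_append S q C ho, mKey_map_append]) ?_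
  rcases o with _ | o
  · simpa [keyLast, rot_zero, precChar] using hC
  · rw [keyLast, rot_block_append S q C ho]
    show lastOut _ = _
    rw [← List.cons_append, ← List.append_assoc, precChar_drop ho o.succ_ne_zero,
      lastOut_append_map_inr]

-- `cs` collects the blocks already rotated to the back.
theorem map_keyLast_rot_blocks (bs cs : List (List α × Fin k)) :
    (List.range (blocks bs).length).map (fun j => keyLast (rot (blocks (bs ++ cs)) j)) =
      bs.flatMap fun b => suffixesWithPrec b.1 := by
  induction bs generalizing cs with
  | nil => simp [blocks]
  | cons b bs ih =>
    obtain ⟨S, q⟩ := b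
    have hlen : (block S q).length = S.length + 1 := by simp [block]
    rw [blocks_cons, List.length_append, List.range_add, List.map_append, List.flatMap_cons, hlen,
      List.cons_append, blocks_cons]
    congr 1
    · refine List.map_congr_left fun o ho => keyLast_rot_block_append
        (by simp at ho; omega) ?_
      rw [← blocks_cons]
      exact lastOut_blocks (List.cons_ne_nil _ _)
    · rw [← ih (cs ++ [(S, q)]), List.map_map]
      refine List.map_congr_left fun o ho => ?_
      rw [Function.comp_apply, ← hlen, blocks_append,
        rot_append_length_add _ _ (by simp at ho ⊢; omega)]
      simp [blocks]

theorem map_keyLast_mRots (T : Fin k → List α) (σ : Equiv.Perm (Fin k)) :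
    (mRots T σ).map keyLast = (List.finRange k).flatMap fun p => suffixesWithPrec (T (σ p)) := by
  have h := map_keyLast_rot_blocks ((List.finRange k).map fun p => (T (σ p), p)) []
  rw [List.append_nil, List.flatMap_map] at h
  rw [mRots, List.map_map, mWord_eq_blocks]
  exact h

theorem map_mKey_mRots_perm (T : Fin k → List α) (σ : Equiv.Perm (Fin k)) :
    ((mRots T σ).map mKey).Perm
      ((List.finRange k).flatMap fun i => (suffixesWithPrec (T i)).map Prod.fst) := by
  have h : (mRots T σ).map mKey =
      ((List.finRange k).map σ).flatMap fun i => (suffixesWithPrec (T i)).map Prod.fst := by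
    rw [List.flatMap_map, ← List.map_flatMap, ← map_keyLast_mRots, List.map_map]
    rfl
  exact h ▸ σ.map_finRange_perm.flatMap_right _

theorem exists_suffix_of_mem_mRots {T : Fin k → List α} {σ : Equiv.Perm (Fin k)}
    {R : List (Fin k ⊕ₗ α)} (hR : R ∈ mRots T σ) :
    ∃ i o, mKey R = (T i).drop o ∧ lastOut R = precChar (T i) ((T i).drop o) := by
  have h := List.mem_map_of_mem (f := keyLast) hR
  simp only [map_keyLast_mRots, suffixesWithPrec, List.mem_flatMap, List.mem_map] at h
  obtain ⟨p, -, o, -, ho⟩ := h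
  exact ⟨σ p, o, (congrArg Prod.fst ho).symm, (congrArg Prod.snd ho).symm⟩

theorem interesting_mKey {T : Fin k → List α} {σ τ : Equiv.Perm (Fin k)}
    {R R' : List (Fin k ⊕ₗ α)} (hR : R ∈ mRots T σ) (hR' : R' ∈ mRots T τ)
    (hkey : mKey R = mKey R') (hlast : lastOut R ≠ lastOut R') : Interesting T (mKey R) := by
  obtain ⟨i, o, hU, hprec⟩ := exists_suffix_of_mem_mRots hR
  obtain ⟨i', o', hU', hprec'⟩ := exists_suffix_of_mem_mRots hR'
  rw [← hU] at hprec
  rw [← hU', ← hkey] at hprec'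
  refine ⟨i, i', fun h => hlast ?_, hU ▸ List.drop_suffix _ _,
    hkey ▸ hU' ▸ List.drop_suffix _ _, hprec ▸ hprec' ▸ hlast⟩
  rw [hprec, hprec', h]

end MultidollarRotations

section DollarRotations

variable {α : Type*} {k : ℕ}

-- `WithBot α` is `Option α`, with `⊥ = none` as the sentinel `$`.
theorem sepMonotone_withBot [LT α] : SepMonotone (id : WithBot α → Option α) := by
  intro x y hxy a hx
  obtain rfl : x = (a : WithBot α) := hx
  obtain ⟨b, rfl, hab⟩ := WithBot.lt_iff_exists_coe.mp hxy
  exact ⟨b, rfl, WithBot.coe_lt_coe.mp hab⟩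

def dolKey : List (WithBot α) → List α := prefixBeforeSep id

-- The coercion in `dstr` elaborates to the monadic lift `T >>= pure ∘ WithBot.some`.
theorem dstr_eq_map_append (T : List α) : dstr T = T.map WithBot.some ++ [⊥] := by
  simp [dstr, List.map_eq_flatMap]

theorem length_dstr (S : List α) : (dstr S).length = S.length + 1 := by
  simp [dstr_eq_map_append]

theorem dolKey_dstr_append (X : List α) (Y : List (WithBot α)) : dolKey (dstr X ++ Y) = X := by
  rw [dstr_eq_map_append, List.append_assoc, List.singleton_append]
  exact prefixBeforeSep_map_append (f := (id : WithBot α → Option α)) (e := WithBot.some)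
    (fun _ => rfl) rfl X Y

theorem rot_dstr (S : List α) {o : ℕ} (ho : o ≤ S.length) :
    rot (dstr S) o = dstr (S.drop o) ++ (S.take o).map WithBot.some := by
  simp [rot, dstr_eq_map_append, List.drop_append, List.take_append, ho, List.map_drop,
    List.map_take]

theorem map_dolKey_dolRots (T : Fin k → List α) :
    (dolRots T).map dolKey =
      (List.finRange k).flatMap fun i => (suffixesWithPrec (T i)).map Prod.fst := by
  simp only [dolRots, suffixesWithPrec, List.map_flatMap, List.map_map, length_dstr]
  refine List.flatMap_congr fun i _ => List.map_congr_left fun o ho => ?_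
  simp [rot_dstr _ (Nat.lt_succ_iff.mp (List.mem_range.mp ho)), dolKey_dstr_append]

theorem dstr_dolKey_prefix {T : Fin k → List α} {R : List (WithBot α)} (hR : R ∈ dolRots T) :
    dstr (dolKey R) <+: R := by
  simp only [dolRots, List.mem_flatMap, List.mem_map, List.mem_range, length_dstr] at hR
  obtain ⟨i, -, o, ho, rfl⟩ := hR
  rw [rot_dstr _ (Nat.lt_succ_iff.mp ho), dolKey_dstr_append]
  exact List.prefix_append _ _

theorem exists_isLeast_isGreatest_rankSet {L0 : List (List (WithBot α))} {U : List α} {p : ℕ}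
    (hp : p ∈ rankSet L0 U) :
    ∃ b e, IsLeast (rankSet L0 U) b ∧ IsGreatest (rankSet L0 U) e ∧ b ≤ p ∧ p ≤ e := by
  have hbdd : BddAbove (rankSet L0 U) :=
    ⟨L0.length, fun q ⟨_, hq, _⟩ => (List.getElem?_eq_some_iff.mp hq).1.le⟩
  obtain ⟨b, hb⟩ := (OrderBot.bddBelow _).exists_isLeast_of_nonempty ⟨p, hp⟩
  obtain ⟨e, he⟩ := hbdd.exists_isGreatest_of_nonempty ⟨p, hp⟩
  exact ⟨b, e, hb, he, hb.2 hp, he.2 hp⟩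

end DollarRotations

theorem mdolBWT_differences_in_interesting_intervals_general {α : Type*} [LinearOrder α]
    (k : ℕ) (T : Fin k → List α)
    (σ τ : Equiv.Perm (Fin k))
    (L0 : List (List (WithBot α))) (hperm0 : L0.Perm (dolRots T))
    (hsort0 : L0.Pairwise listLe)
    (L1 L2 : List (List (Fin k ⊕ₗ α)))
    (hperm1 : L1.Perm (mRots T σ)) (hsort1 : L1.Pairwise listLe)
    (hperm2 : L2.Perm (mRots T τ)) (hsort2 : L2.Pairwise listLe)
    (p : ℕ) (hp : (mdolOf L1)[p]? ≠ (mdolOf L2)[p]?) :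
    ∃ (U : List α) (b e : ℕ), Interesting T U ∧
      IsLeast (rankSet L0 U) b ∧ IsGreatest (rankSet L0 U) e ∧
      b ≤ p ∧ p ≤ e := by
  have hK0 := (hperm0.map dolKey).trans (.of_eq (map_dolKey_dolRots T))
  have hK1 := (hperm1.map mKey).trans (map_mKey_mRots_perm T σ)
  have hK2 := (hperm2.map mKey).trans (map_mKey_mRots_perm T τ)
  have h01 : L0.map dolKey = L1.map mKey :=
    map_eq_of_pairwise_listLe sepMonotone_withBot sepMonotone_letterOf hsort0 hsort1
      (hK0.trans hK1.symm)
  have h12 : L1.map mKey = L2.map mKey :=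
    map_eq_of_pairwise_listLe sepMonotone_letterOf sepMonotone_letterOf hsort1 hsort2
      (hK1.trans hK2.symm)
  obtain ⟨R1, R2, hR1, hR2, hkey, hlast⟩ := exists_getElem?_of_map_eq_of_map_ne h12 hp
  obtain ⟨R0, hR0, hkey0⟩ : ∃ R0, L0[p]? = some R0 ∧ dolKey R0 = mKey R1 := by
    simpa [hR1] using congrArg (·[p]?) h01
  have hrank : p ∈ rankSet L0 (mKey R1) :=
    ⟨R0, hR0, hkey0 ▸ dstr_dolKey_prefix (hperm0.subset (List.mem_of_getElem? hR0))⟩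
  obtain ⟨b, e, hb, he, hbp, hpe⟩ := exists_isLeast_isGreatest_rankSet hrank
  exact ⟨mKey R1, b, e, interesting_mKey (hperm1.subset (List.mem_of_getElem? hR1))
    (hperm2.subset (List.mem_of_getElem? hR2)) hkey hlast, hb, he, hbp, hpe⟩

/-- If `mdolBWT(M,σ)` and `mdolBWT(M,τ)` differ at a position `p`, then
`p` belongs to some interesting interval `[b,e]` of `M`, i.e. `b ≤ p ≤ e`.  Here
`L0` is the lexicographically sorted list of rotations of the `T_i·$` (defining the
ranks of interesting intervals), and `L1`, `L2` are the sorted rotation lists of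
`W_σ`, `W_τ`. -/
theorem mdolBWT_differences_in_interesting_intervals {α : Type*} [LinearOrder α]
    (k : ℕ) (hk : 2 ≤ k) (T : Fin k → List α) (hT : ∀ i, T i ≠ [])
    (σ τ : Equiv.Perm (Fin k))
    (L0 : List (List (WithBot α))) (hperm0 : L0.Perm (dolRots T))
    (hsort0 : L0.Pairwise listLe)
    (L1 L2 : List (List (Fin k ⊕ₗ α)))
    (hperm1 : L1.Perm (mRots T σ)) (hsort1 : L1.Pairwise listLe)
    (hperm2 : L2.Perm (mRots T τ)) (hsort2 : L2.Pairwise listLe)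
    (p : ℕ) (hp : (mdolOf L1)[p]? ≠ (mdolOf L2)[p]?) :
    ∃ (U : List α) (b e : ℕ), Interesting T U ∧
      IsLeast (rankSet L0 U) b ∧ IsGreatest (rankSet L0 U) e ∧
      b ≤ p ∧ p ≤ e :=
  mdolBWT_differences_in_interesting_intervals_general k T σ τ L0 hperm0 hsort0 L1 L2 hperm1 hsort1
    hperm2 hsort2 p hp
end

section
/- For permutations σ and τ of {1,…,k}, let I_1 and I_2 be the sets of positions at which the sentinel $ occurs in mdolBWT(M,σ) and in mdolBWT(M,τ), respectively. If I_1 ≠ I_2, then there exist indices i ≠ j such that T_i is a proper suffix of T_j. -/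
open List

namespace MdolBWT

section LeadingText

variable {β γ : Type*}

def leadingText : List (β ⊕ₗ γ) → List γ
  | [] => []
  | c :: l => Sum.elim (fun _ => []) (fun a => a :: leadingText l) (ofLex c)

@[simp] theorem leadingText_inl_cons (b : β) (l : List (β ⊕ₗ γ)) :
    leadingText (toLex (Sum.inl b) :: l) = [] := rfl

@[simp] theorem leadingText_inr_cons (a : γ) (l : List (β ⊕ₗ γ)) :
    leadingText (toLex (Sum.inr a) :: l) = a :: leadingText l := rfl

@[simp] theorem leadingText_map_inr_append_inl_cons (t : List γ) (b : β) (l : List (β ⊕ₗ γ)) :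
    leadingText (t.map (fun a => toLex (Sum.inr a)) ++ toLex (Sum.inl b) :: l) = t := by
  induction t <;> simp [*]

theorem leadingText_append_of_inl_mem {l₁ : List (β ⊕ₗ γ)} (l₂ : List (β ⊕ₗ γ)) {b : β}
    (hb : toLex (Sum.inl b) ∈ l₁) : leadingText (l₁ ++ l₂) = leadingText l₁ := by
  induction l₁ with
  | nil => simp at hb
  | cons c l ih =>
    obtain ⟨x | a, rfl⟩ : ∃ x, toLex x = c := ⟨ofLex c, rfl⟩
    · simp
    · have hb : toLex (Sum.inl b) ∈ l := by simpa using hb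
      simp [ih hb]

theorem listLe_nil [LT γ] (l : List γ) : listLe [] l := by
  cases l with
  | nil => exact Or.inl rfl
  | cons a l => exact Or.inr List.Lex.nil

theorem listLe_cons [LT γ] {l l' : List γ} (a : γ) (h : listLe l l') :
    listLe (a :: l) (a :: l') :=
  h.imp (congrArg _) List.Lex.cons

instance [LinearOrder γ] : Std.Antisymm (listLe : List γ → List γ → Prop) where
  antisymm
    | _, _, .inl h, _ => h
    | _, _, .inr _, .inl h => h.symm
    | _, _, .inr h₁, .inr h₂ => absurd h₂ (Std.Asymm.asymm _ _ h₁)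

theorem leadingText_mono [LT β] [LT γ] {X Y : List (β ⊕ₗ γ)} (h : List.Lex (· < ·) X Y) :
    listLe (leadingText X) (leadingText Y) := by
  induction h with
  | nil => exact listLe_nil _
  | @cons c _ _ _ ih =>
    obtain ⟨x | a, rfl⟩ : ∃ x, toLex x = c := ⟨ofLex c, rfl⟩
    · exact listLe_nil _
    · exact listLe_cons a ih
  | @rel c _ d _ hcd =>
    obtain ⟨x, rfl⟩ : ∃ x, toLex x = c := ⟨ofLex c, rfl⟩
    obtain ⟨y, rfl⟩ : ∃ y, toLex y = d := ⟨ofLex d, rfl⟩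
    cases Sum.Lex.toLex_lt_toLex.mp hcd with
    | inr h => exact Or.inr (List.Lex.rel h)
    | inl | sep => exact listLe_nil _

end LeadingText

theorem map_drop_range_eq_tails {δ : Type*} (l : List δ) :
    (range (l.length + 1)).map l.drop = l.tails :=
  ext_getElem (by simp) fun n _ _ => by simp [getElem_tails]

section Blocks

variable {ι β γ : Type*}

def block (t : List γ) (b : β) : List (β ⊕ₗ γ) :=
  t.map (fun a => toLex (Sum.inr a)) ++ [toLex (Sum.inl b)]

theorem block_append (t : List γ) (b : β) (l : List (β ⊕ₗ γ)) :
    block t b ++ l = t.map (fun a => toLex (Sum.inr a)) ++ toLex (Sum.inl b) :: l := by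
  simp [block]

@[simp] theorem length_block (t : List γ) (b : β) : (block t b).length = t.length + 1 := by
  simp [block]

theorem drop_block_append {t : List γ} {m : ℕ} (hm : m ≤ t.length) (b : β) (l : List (β ⊕ₗ γ)) :
    (block t b ++ l).drop m =
      (t.drop m).map (fun a => toLex (Sum.inr a)) ++ toLex (Sum.inl b) :: l := by
  rw [block_append, drop_append_of_le_length (by simpa), map_drop]

theorem take_block_append {t : List γ} {m : ℕ} (hm : m ≤ t.length) (b : β) (l : List (β ⊕ₗ γ)) :
    (block t b ++ l).take m = (t.take m).map (fun a => toLex (Sum.inr a)) := by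
  rw [block_append, take_append_of_le_length (by simpa), map_take]

theorem getLast?_flatMap_block (t : ι → List γ) (s : ι → β) {ps : List ι} (hps : ps ≠ []) :
    ∃ b, (ps.flatMap fun p => block (t p) (s p)).getLast? = some (toLex (Sum.inl b)) := by
  obtain ⟨ps, p, rfl⟩ := (eq_nil_or_concat ps).resolve_left hps
  exact ⟨s p, by simp [block]⟩

theorem exists_eq_append_cons_of_lt_length_flatMap {δ : Type*} {f : ι → List δ} {ps : List ι}
    {j : ℕ} (hj : j < (ps.flatMap f).length) :
    ∃ ps₁ p ps₂ m, ps = ps₁ ++ p :: ps₂ ∧ m < (f p).length ∧ j = (ps₁.flatMap f).length + m := by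
  induction ps generalizing j with
  | nil => simp at hj
  | cons p ps ih =>
    by_cases hjp : j < (f p).length
    · exact ⟨[], p, ps, j, rfl, hjp, by simp⟩
    · obtain ⟨ps₁, q, ps₂, m, rfl, hm, hj'⟩ :=
        ih (j := j - (f p).length) (by rw [flatMap_cons, length_append] at hj; omega)
      exact ⟨p :: ps₁, q, ps₂, m, rfl, hm, by rw [flatMap_cons, length_append]; omega⟩

theorem leadingText_rotate_eq_leadingText_drop {W : List (β ⊕ₗ γ)} {b : β}
    (hW : W.getLast? = some (toLex (Sum.inl b))) {j : ℕ} (hj : j < W.length) :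
    leadingText (W.rotate j) = leadingText (W.drop j) := by
  have hmem : toLex (Sum.inl b) ∈ W.drop j := by
    apply mem_of_getLast?
    rwa [getLast?_drop, if_neg (by omega)]
  rw [rotate_eq_drop_append_take hj.le, leadingText_append_of_inl_mem _ hmem]

theorem map_leadingText_drop_flatMap_block (t : ι → List γ) (s : ι → β) (ps : List ι) :
    (range (ps.flatMap fun p => block (t p) (s p)).length).map
        (fun j => leadingText ((ps.flatMap fun p => block (t p) (s p)).drop j)) =
      ps.flatMap fun p => (t p).tails := by
  induction ps with
  | nil => simp
  | cons p ps ih =>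
    rw [flatMap_cons, flatMap_cons, length_append, range_add, map_append, map_map, ← ih]
    congr 1
    · rw [length_block, ← map_drop_range_eq_tails]
      refine map_congr_left fun j hj => ?_
      rw [drop_block_append (by simp at hj; omega), leadingText_map_inr_append_inl_cons]
    · exact map_congr_left fun j _ => by simp only [Function.comp_apply, drop_length_add_append]

end Blocks

section Rotations

variable {ι α : Type*} {k : ℕ}

theorem lastOut_eq_bot_of_getLast? {R : List (Fin k ⊕ₗ α)} {b : Fin k}
    (h : R.getLast? = some (toLex (Sum.inl b))) : lastOut R = ⊥ := by
  simp [lastOut, h]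

theorem lastOut_append_map_inr_ne_bot (R : List (Fin k ⊕ₗ α)) {u : List α} (hu : u ≠ []) :
    lastOut (R ++ u.map fun a => toLex (Sum.inr a)) ≠ ⊥ := by
  obtain ⟨u, a, rfl⟩ := (eq_nil_or_concat u).resolve_left hu
  simp [lastOut]

theorem exists_leadingText_drop_lastOut_rotate (t : ι → List α) (s : ι → Fin k) {ps : List ι}
    {j : ℕ} (hj : j < (ps.flatMap fun p => block (t p) (s p)).length) :
    ∃ p ∈ ps, ∃ m ≤ (t p).length,
      leadingText ((ps.flatMap fun p => block (t p) (s p)).drop j) = (t p).drop m ∧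
      (lastOut ((ps.flatMap fun p => block (t p) (s p)).rotate j) = ⊥ ↔ m = 0) := by
  obtain ⟨ps₁, p, ps₂, m, rfl, hm, rfl⟩ := exists_eq_append_cons_of_lt_length_flatMap hj
  rw [length_block, Nat.lt_succ_iff] at hm
  refine ⟨p, by simp, m, hm, ?_, ?_⟩
  · rw [flatMap_append, flatMap_cons, drop_length_add_append, drop_block_append hm,
      leadingText_map_inr_append_inl_cons]
  · rw [flatMap_append, flatMap_cons, rotate_eq_drop_append_take
        (by simp only [length_append, length_block]; omega),
      drop_length_add_append, take_length_add_append, drop_block_append hm,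
      take_block_append hm]
    rcases Nat.eq_zero_or_pos m with rfl | hpos
    -- for `m = 0` the rotation is again a concatenation of whole blocks
    · obtain ⟨b, hb⟩ := getLast?_flatMap_block t s (ps := p :: (ps₂ ++ ps₁)) (cons_ne_nil _ _)
      refine iff_of_true (lastOut_eq_bot_of_getLast? (b := b) ?_) rfl
      rw [← hb]
      simp [block]
    · rw [← append_assoc]
      have htake : (t p).take m ≠ [] := ne_nil_of_length_pos (by simp; omega)
      exact iff_of_false (lastOut_append_map_inr_ne_bot _ htake) hpos.ne'

end Rotations

section MultidollarBWT

variable {α : Type*} {k : ℕ}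

theorem mWord_eq_flatMap_block (T : Fin k → List α) (σ : Equiv.Perm (Fin k)) :
    mWord T σ = (finRange k).flatMap fun p => block (T (σ p)) p := rfl

theorem mem_mRots {T : Fin k → List α} {σ : Equiv.Perm (Fin k)} {R : List (Fin k ⊕ₗ α)} :
    R ∈ mRots T σ ↔ ∃ j < (mWord T σ).length, (mWord T σ).rotate j = R := by
  simp only [mRots, mem_map, mem_range]
  refine exists_congr fun j => and_congr_right fun hj => ?_
  rw [rot, rotate_eq_drop_append_take hj.le]

theorem getLast?_mWord (T : Fin k → List α) (σ : Equiv.Perm (Fin k))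
    (hW : mWord T σ ≠ []) : ∃ b, (mWord T σ).getLast? = some (toLex (Sum.inl b)) :=
  getLast?_flatMap_block _ _ fun hk => hW (by rw [mWord_eq_flatMap_block, hk, flatMap_nil])

theorem map_leadingText_mRots_perm (T : Fin k → List α) (σ : Equiv.Perm (Fin k)) :
    (mRots T σ).map leadingText ~ (finRange k).flatMap fun i => (T i).tails := by
  set W := mWord T σ
  calc (mRots T σ).map leadingText
      = (range W.length).map fun j => leadingText (W.drop j) := by
        rw [mRots, map_map]
        refine map_congr_left fun j hj => ?_
        rw [mem_range] at hj
        obtain ⟨b, hb⟩ := getLast?_mWord T σ (ne_nil_of_length_pos (by omega))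
        rw [Function.comp_apply, rot, ← rotate_eq_drop_append_take hj.le,
          leadingText_rotate_eq_leadingText_drop hb hj]
    _ = (finRange k).flatMap fun p => (T (σ p)).tails := map_leadingText_drop_flatMap_block _ _ _
    _ ~ (finRange k).flatMap fun i => (T i).tails := by
        rw [← flatMap_map (f := σ) (g := fun i => (T i).tails)]
        exact σ.map_finRange_perm.flatMap_right _

theorem exists_of_mem_mRots {T : Fin k → List α} {σ : Equiv.Perm (Fin k)}
    {R : List (Fin k ⊕ₗ α)} (hR : R ∈ mRots T σ) :
    ∃ i, ∃ m ≤ (T i).length, leadingText R = (T i).drop m ∧ (lastOut R = ⊥ ↔ m = 0) := by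
  obtain ⟨j, hj, rfl⟩ := mem_mRots.mp hR
  obtain ⟨p, -, m, hm, hkey, hbot⟩ :=
    exists_leadingText_drop_lastOut_rotate (fun p => T (σ p)) id hj
  obtain ⟨b, hb⟩ := getLast?_mWord T σ (ne_nil_of_length_pos (by omega))
  exact ⟨σ p, m, hm, (leadingText_rotate_eq_leadingText_drop hb hj).trans hkey, hbot⟩

theorem lastOut_eq_bot_iff_leadingText_mem_range {T : Fin k → List α} (hT : ∀ i, T i ≠ [])
    (hsuf : ∀ i j, T i <:+ T j → T i = T j) {σ : Equiv.Perm (Fin k)} {R : List (Fin k ⊕ₗ α)}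
    (hR : R ∈ mRots T σ) : lastOut R = ⊥ ↔ leadingText R ∈ Set.range T := by
  obtain ⟨i, m, hm, hkey, hbot⟩ := exists_of_mem_mRots hR
  rw [hbot, hkey]
  refine ⟨fun h => ⟨i, by rw [h, drop_zero]⟩, fun ⟨i', hi'⟩ => ?_⟩
  have hlen := congrArg length (hsuf i' i (hi' ▸ drop_suffix m (T i)))
  rw [hi', length_drop] at hlen
  have := length_pos_iff.mpr (hT i)
  omega

theorem setOf_getElem?_mdolOf_eq_bot {T : Fin k → List α} (hT : ∀ i, T i ≠ [])
    (hsuf : ∀ i j, T i <:+ T j → T i = T j) {σ : Equiv.Perm (Fin k)}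
    {L : List (List (Fin k ⊕ₗ α))} (hL : L ~ mRots T σ) :
    {p : ℕ | (mdolOf L)[p]? = some ⊥} =
      {p : ℕ | ∃ K ∈ (L.map leadingText)[p]?, K ∈ Set.range T} := by
  ext p
  simp only [Set.mem_ofPred_eq, mdolOf, getElem?_map]
  cases hp : L[p]? with
  | none => simp
  | some R =>
    simpa using lastOut_eq_bot_iff_leadingText_mem_range hT hsuf (hL.subset (mem_of_getElem? hp))

theorem map_leadingText_eq_of_perm_mRots [LinearOrder α] {T : Fin k → List α}
    {σ τ : Equiv.Perm (Fin k)} {L₁ L₂ : List (List (Fin k ⊕ₗ α))}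
    (hperm₁ : L₁ ~ mRots T σ) (hsort₁ : L₁.Pairwise listLe)
    (hperm₂ : L₂ ~ mRots T τ) (hsort₂ : L₂.Pairwise listLe) :
    L₁.map leadingText = L₂.map leadingText := by
  have hmono : ∀ X Y : List (Fin k ⊕ₗ α), listLe X Y → listLe (leadingText X) (leadingText Y) :=
    fun X Y h => h.elim (fun h => Or.inl (congrArg _ h)) leadingText_mono
  refine Perm.eq_of_pairwise' (hsort₁.map _ hmono) (hsort₂.map _ hmono) ?_
  exact ((hperm₁.map _).trans (map_leadingText_mRots_perm T σ)).trans
    ((hperm₂.map _).trans (map_leadingText_mRots_perm T τ)).symm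

end MultidollarBWT

end MdolBWT

theorem mdolBWT_dollar_positions_general {α : Type*} [LinearOrder α]
    (k : ℕ) (T : Fin k → List α) (hT : ∀ i, T i ≠ [])
    (σ τ : Equiv.Perm (Fin k))
    (L1 L2 : List (List (Fin k ⊕ₗ α)))
    (hperm1 : L1.Perm (mRots T σ)) (hsort1 : L1.Pairwise listLe)
    (hperm2 : L2.Perm (mRots T τ)) (hsort2 : L2.Pairwise listLe)
    (hne : {p : ℕ | (mdolOf L1)[p]? = some ⊥} ≠ {p : ℕ | (mdolOf L2)[p]? = some ⊥}) :
    ∃ i j : Fin k, i ≠ j ∧ T i <:+ T j ∧ T i ≠ T j := by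
  by_contra hproper
  have hsuf : ∀ i j, T i <:+ T j → T i = T j := fun i j h =>
    by_contra fun hij => hproper ⟨i, j, fun h' => hij (congrArg T h'), h, hij⟩
  apply hne
  rw [MdolBWT.setOf_getElem?_mdolOf_eq_bot hT hsuf hperm1,
    MdolBWT.setOf_getElem?_mdolOf_eq_bot hT hsuf hperm2,
    MdolBWT.map_leadingText_eq_of_perm_mRots hperm1 hsort1 hperm2 hsort2]

/-- Let `I_1` and `I_2` be the sets of positions at which the sentinel `$`
occurs in `mdolBWT(M,σ)` and in `mdolBWT(M,τ)` respectively.  If `I_1 ≠ I_2`, then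
there exist indices `i ≠ j` such that `T_i` is a proper suffix of `T_j`. -/
theorem mdolBWT_dollar_positions {α : Type*} [LinearOrder α]
    (k : ℕ) (hk : 2 ≤ k) (T : Fin k → List α) (hT : ∀ i, T i ≠ [])
    (σ τ : Equiv.Perm (Fin k))
    (L1 L2 : List (List (Fin k ⊕ₗ α)))
    (hperm1 : L1.Perm (mRots T σ)) (hsort1 : L1.Pairwise listLe)
    (hperm2 : L2.Perm (mRots T τ)) (hsort2 : L2.Pairwise listLe)
    (hne : {p : ℕ | (mdolOf L1)[p]? = some ⊥} ≠ {p : ℕ | (mdolOf L2)[p]? = some ⊥}) :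
    ∃ i j : Fin k, i ≠ j ∧ T i <:+ T j ∧ T i ≠ T j :=
  mdolBWT_dollar_positions_general k T hT σ τ L1 L2 hperm1 hsort1 hperm2 hsort2 hne
end

section
/- Let T_1,…,T_k (k ≥ 2) be pairwise distinct nonempty strings over a linearly ordered alphabet Σ, and let # and $ be symbols with # < $ < c for every c ∈ Σ. Let W = T_1 $ T_2 $ ⋯ T_k $ #, and for 1 ≤ i ≤ k let s_i denote the suffix of W beginning at the occurrence of $ that immediately follows T_i (so s_k = $#). Then s_k is lexicographically the smallest among s_1,…,s_k, and for all i, j with 1 ≤ i, j ≤ k−1, s_i <lex s_j if and only if T_{i+1} <lex T_{j+1}. (This describes the tie-breaking rule of the concatenated BWT: among rotations starting with the separator, the order is determined by the lexicographic order of the subsequent input strings, with the suffix following the last string being smallest.) -/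
/-- The alphabet `Σ` extended by two extra symbols `# < $`, both smaller than every
symbol of `Σ`: `#` is `toLex (Sum.inl 0)`, `$` is `toLex (Sum.inl 1)`. -/
abbrev ConcAlph (α : Type*) := Fin 2 ⊕ₗ α

def hashSym {α : Type*} : ConcAlph α := toLex (Sum.inl 0)

def dolSym {α : Type*} : ConcAlph α := toLex (Sum.inl 1)

def embSym {α : Type*} (a : α) : ConcAlph α := toLex (Sum.inr a)

/-- The block `T_j·$`. -/
def blockOf {α : Type*} (Tj : List α) : List (ConcAlph α) := Tj.map embSym ++ [dolSym]

/-- `W = T_1 $ T_2 $ ⋯ T_k $ #`. -/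
def concW {α : Type*} {k : ℕ} (T : Fin k → List α) : List (ConcAlph α) :=
  ((List.finRange k).flatMap fun j => blockOf (T j)) ++ [hashSym]

/-- `s_i`: the suffix of `W` beginning at the occurrence of `$` immediately following
`T_i`, namely `$ T_{i+1} $ ⋯ T_k $ #`. -/
def sfx {α : Type*} {k : ℕ} (T : Fin k → List α) (i : Fin k) : List (ConcAlph α) :=
  dolSym :: ((((List.finRange k).drop (i.1 + 1)).flatMap fun j => blockOf (T j)) ++
    [hashSym])

section aux

variable {α : Type*} [LinearOrder α]

lemma lt_emb_of_inl (i : Fin 2) (a : α) :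
    (toLex (Sum.inl i) : ConcAlph α) < embSym a := by
  simp [embSym, Sum.Lex.toLex_lt_toLex]

lemma dol_lt_emb (a : α) : (dolSym : ConcAlph α) < embSym a := lt_emb_of_inl 1 a

lemma hash_lt_emb (a : α) : (hashSym : ConcAlph α) < embSym a := lt_emb_of_inl 0 a

lemma emb_lt_emb {a b : α} : (embSym a : ConcAlph α) < embSym b ↔ a < b := by
  simp [embSym, Sum.Lex.toLex_lt_toLex]

lemma emb_not_lt_dol (a : α) : ¬ (embSym a : ConcAlph α) < dolSym :=
  not_lt_of_gt (dol_lt_emb a)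

lemma emb_ne_dol (a : α) : (embSym a : ConcAlph α) ≠ dolSym :=
  ne_of_gt (dol_lt_emb a)

lemma lex_irrefl (l : List α) : ¬ List.Lex (· < ·) l l := by
  induction l with
  | nil => intro h; cases h
  | cons a t ih =>
    intro h
    cases h with
    | rel h => exact absurd h (lt_irrefl _)
    | cons h => exact ih (by assumption)

/-- Key lemma: comparison of two distinct embedded blocks with arbitrary tails. -/
lemma block_lex (X : List α) : ∀ (Y : List α), X ≠ Y → ∀ (u v : List (ConcAlph α)),
    (List.Lex (· < ·) (X.map embSym ++ dolSym :: u) (Y.map embSym ++ dolSym :: v) ↔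
      List.Lex (· < ·) X Y) := by
  induction X with
  | nil =>
    intro Y hXY u v
    cases Y with
    | nil => exact absurd rfl hXY
    | cons b Y' =>
      simp only [List.map_nil, List.nil_append, List.map_cons, List.cons_append]
      constructor
      · intro _; exact List.Lex.nil
      · intro _; exact List.Lex.rel (dol_lt_emb b)
  | cons a X' ih =>
    intro Y hXY u v
    cases Y with
    | nil =>
      simp only [List.map_nil, List.nil_append, List.map_cons, List.cons_append]
      constructor
      · intro h
        cases h with
        | rel h => exact absurd h (emb_not_lt_dol a)
      · intro h; cases h
    | cons b Y' =>
      simp only [List.map_cons, List.cons_append]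
      rcases lt_trichotomy a b with hab | hab | hab
      · constructor
        · intro _; exact List.Lex.rel hab
        · intro _; exact List.Lex.rel (emb_lt_emb.mpr hab)
      · subst hab
        have hne : X' ≠ Y' := fun h => hXY (by rw [h])
        rw [List.lex_cons_iff, List.lex_cons_iff]
        exact ih Y' hne u v
      · have h1 : ¬ List.Lex (· < ·)
            (embSym a :: (X'.map embSym ++ dolSym :: u))
            (embSym b :: (Y'.map embSym ++ dolSym :: v)) := by
          intro h
          cases h with
          | rel h => exact absurd (emb_lt_emb.mp h) (not_lt_of_gt hab)
          | cons h => exact absurd hab (lt_irrefl _)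
        have h2 : ¬ List.Lex (· < ·) (a :: X') (b :: Y') := by
          intro h
          cases h with
          | rel h => exact absurd h (not_lt_of_gt hab)
          | cons h => exact absurd hab (lt_irrefl _)
        exact iff_of_false h1 h2
end aux

/-- Let `T_1,…,T_k` (`k ≥ 2`) be pairwise distinct nonempty strings and
`W = T_1 $ T_2 $ ⋯ T_k $ #` with `# < $ <` every symbol of `Σ`.  Each `s_i` is a suffix
of `W`; `s_k` is lexicographically the smallest among `s_1,…,s_k`; and for all
`i, j ≤ k−1`, `s_i <lex s_j` iff `T_{i+1} <lex T_{j+1}`.  (Modelled 0-indexed on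
`Fin (k+2)`, so the last index is `Fin.last (k+1)`.) -/
theorem concBWT_tie_breaking {α : Type*} [LinearOrder α]
    (k : ℕ) (T : Fin (k + 2) → List α) (hT : ∀ i, T i ≠ [])
    (hdisR : Function.Injective T) :
    (∀ i : Fin (k + 2), sfx T i <:+ concW T) ∧
    (∀ i : Fin (k + 2), i ≠ Fin.last (k + 1) →
      List.Lex (· < ·) (sfx T (Fin.last (k + 1))) (sfx T i)) ∧
    (∀ (i j : Fin (k + 2)) (hi : i.1 + 1 < k + 2) (hj : j.1 + 1 < k + 2),
      List.Lex (· < ·) (sfx T i) (sfx T j) ↔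
        List.Lex (· < ·) (T ⟨i.1 + 1, hi⟩) (T ⟨j.1 + 1, hj⟩)) := by
  -- structural facts
  have hlen : (List.finRange (k + 2)).length = k + 2 := List.length_finRange
  have hget : ∀ (m : ℕ) (hm : m < k + 2),
      (List.finRange (k + 2))[m]'(by simpa [hlen]) = ⟨m, hm⟩ := by
    intro m hm
    simp [List.getElem_finRange, Fin.cast]
  -- drop structure: if m < k+2 then drop m finRange = ⟨m⟩ :: drop (m+1)
  have hdrop : ∀ (m : ℕ) (hm : m < k + 2),
      (List.finRange (k + 2)).drop m = ⟨m, hm⟩ :: (List.finRange (k + 2)).drop (m + 1) := by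
    intro m hm
    rw [List.drop_eq_getElem_cons (by simpa [hlen]), hget m hm]
  -- unfolded form of sfx for non-last indices
  have hsfx : ∀ (i : Fin (k + 2)) (hi : i.1 + 1 < k + 2),
      sfx T i = dolSym :: ((T ⟨i.1 + 1, hi⟩).map embSym ++
        dolSym :: ((((List.finRange (k + 2)).drop (i.1 + 2)).flatMap
          fun j => blockOf (T j)) ++ [hashSym])) := by
    intro i hi
    rw [sfx, hdrop (i.1 + 1) hi]
    simp [blockOf, List.flatMap_cons, List.append_assoc]
  refine ⟨?_, ?_, ?_⟩
  · -- suffix claim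
    intro i
    have hi2 : i.1 < k + 2 := i.2
    have hsplit : List.finRange (k + 2) =
        (List.finRange (k + 2)).take i.1 ++ (⟨i.1, hi2⟩ : Fin (k + 2)) ::
          (List.finRange (k + 2)).drop (i.1 + 1) := by
      conv_lhs => rw [← List.take_append_drop i.1 (List.finRange (k + 2))]
      rw [hdrop i.1 hi2]
    refine ⟨((List.finRange (k + 2)).take i.1).flatMap (fun j => blockOf (T j)) ++
      (T ⟨i.1, hi2⟩).map embSym, ?_⟩
    rw [concW, sfx]
    conv_rhs => rw [hsplit]
    rw [List.flatMap_append, List.flatMap_cons]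
    simp [blockOf, List.append_assoc]
  · -- s_last is smallest
    intro i hi
    have hi' : i.1 + 1 < k + 2 := by
      rcases lt_or_eq_of_le (Nat.le_of_lt_succ i.2) with h | h
      · omega
      · exact absurd (Fin.ext h) hi
    have hlast : sfx T (Fin.last (k + 1)) = [dolSym, hashSym] := by
      rw [sfx]
      have : (List.finRange (k + 2)).drop (k + 1 + 1) = [] :=
        List.drop_eq_nil_of_le (by simp)
      simp [Fin.last, this]
    rw [hlast, hsfx i hi']
    apply List.Lex.cons
    obtain ⟨a, X', hX⟩ := List.exists_cons_of_ne_nil (hT ⟨i.1 + 1, hi'⟩)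
    rw [hX]
    exact List.Lex.rel (hash_lt_emb a)
  · -- tie-breaking
    intro i j hi hj
    rw [hsfx i hi, hsfx j hj, List.lex_cons_iff]
    by_cases hij : i = j
    · subst hij
      exact iff_of_false (lex_irrefl _) (lex_irrefl _)
    · have hne : T ⟨i.1 + 1, hi⟩ ≠ T ⟨j.1 + 1, hj⟩ := by
        intro h
        exact hij (Fin.ext (by
          have := hdisR h
          have := Fin.mk.injEq (i.1 + 1) hi (j.1 + 1) hj ▸ this
          omega))
      exact block_lex _ _ hne _ _
end

section
/- For every k ≥ 2 and every permutation ρ of {1,…,k}: for every i ≠ ρ(k) one has Φ_ρ(i) ≠ ρ(1), so that f_{ρ(1)}(Φ_ρ(i)) is defined; and the map g : {1,…,k} → {1,…,k} given by g(ρ(k)) = 1 and g(i) = f_{ρ(1)}(Φ_ρ(i)) + 1 for i ≠ ρ(k) is a bijection. Hence there is a unique permutation π_conc(ρ) of {1,…,k} with π_conc(ρ)(1) = ρ(k) and π_conc(ρ)^{-1}(i) = f_{ρ(1)}(Φ_ρ(i)) + 1 for all i ≠ ρ(k). -/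
/-!
`Φ_ρ = ρ ∘ (· + 1) ∘ ρ⁻¹` is a bijection sending `ρ(k)` to `ρ(1)`, so it maps the other
points bijectively onto the complement of `ρ(1)`, and on that complement `f_{ρ(1)}` is the
inverse of `Fin.succAbove`, hence a bijection onto `{1,…,k−1}`. Thus `g` is an
injection of `{1,…,k}` into itself, hence a bijection, and `π_conc(ρ)` is its inverse.
-/

/-- The linking permutation `Φ_ρ` of a permutation `ρ` of `{0,…,k−1}` (0-indexed):
`Φ_ρ(i) = ρ(ρ⁻¹(i)+1)` for `i ≠ ρ(k−1)` and `Φ_ρ(ρ(k−1)) = ρ(0)`; both cases are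
captured by `ρ (ρ⁻¹ i + 1)` with addition modulo `k`. -/
def linkPerm {k : ℕ} (ρ : Equiv.Perm (Fin (k + 2))) (i : Fin (k + 2)) : Fin (k + 2) :=
  ρ (ρ.symm i + 1)

/-- `f_j(i)`, for `i ≠ j`: the rank of `i` in `{0,…,k−1} \ {j}` (0-indexed). -/
def rankAvoid {k : ℕ} (j i : Fin (k + 2)) : ℕ := if i < j then i else i - 1

section InjectiveToNat

variable {n : ℕ} {g : Fin n → ℕ}

theorem Equiv.Perm.existsUnique_symm_val_eq (hinj : Function.Injective g)
    (hlt : ∀ i, g i < n) : ∃! π : Equiv.Perm (Fin n), ∀ i, (π.symm i : ℕ) = g i := by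
  have hbij : Function.Bijective fun i => (⟨g i, hlt i⟩ : Fin n) :=
    Finite.injective_iff_bijective.mp fun a b h => hinj (congrArg Fin.val h)
  refine ⟨(Equiv.ofBijective _ hbij).symm, fun i => rfl, fun π hπ => ?_⟩
  rw [← Equiv.symm_symm π]
  congr 1
  ext i
  exact hπ i

theorem exists_eq_of_injective_of_lt (hinj : Function.Injective g) (hlt : ∀ i, g i < n) :
    ∀ m < n, ∃ i, g i = m := by
  intro m hm
  obtain ⟨π, hπ, -⟩ := Equiv.Perm.existsUnique_symm_val_eq hinj hlt
  exact ⟨π ⟨m, hm⟩, by rw [← hπ, Equiv.symm_apply_apply]⟩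

end InjectiveToNat

section RankAvoid

variable {k : ℕ}

theorem rankAvoid_succAbove (j : Fin (k + 2)) (y : Fin (k + 1)) :
    rankAvoid j (j.succAbove y) = y := by
  unfold rankAvoid Fin.succAbove
  split_ifs <;> simp_all [Fin.lt_def]; omega

theorem rankAvoid_lt {j i : Fin (k + 2)} (hij : i ≠ j) : rankAvoid j i < k + 1 := by
  obtain ⟨y, rfl⟩ := Fin.exists_succAbove_eq hij
  rw [rankAvoid_succAbove]
  exact y.isLt

theorem rankAvoid_injOn (j : Fin (k + 2)) : Set.InjOn (rankAvoid j) {j}ᶜ := by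
  rintro _ hx _ hy hxy
  obtain ⟨x, rfl⟩ := Fin.exists_succAbove_eq hx
  obtain ⟨y, rfl⟩ := Fin.exists_succAbove_eq hy
  rw [rankAvoid_succAbove, rankAvoid_succAbove, Fin.val_inj] at hxy
  rw [hxy]

end RankAvoid

section PiConc

variable {k : ℕ} (ρ : Equiv.Perm (Fin (k + 2)))

theorem linkPerm_injective : Function.Injective (linkPerm ρ) :=
  ρ.injective.comp ((add_left_injective 1).comp ρ.symm.injective)

theorem linkPerm_eq_apply_zero_iff (i : Fin (k + 2)) :
    linkPerm ρ i = ρ 0 ↔ i = ρ (Fin.last (k + 1)) := by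
  rw [linkPerm, ρ.apply_eq_iff_eq, ← Fin.last_add_one, add_left_inj, Equiv.symm_apply_eq]

theorem linkPerm_ne_apply_zero {i : Fin (k + 2)} (hi : i ≠ ρ (Fin.last (k + 1))) :
    linkPerm ρ i ≠ ρ 0 :=
  (linkPerm_eq_apply_zero_iff ρ i).not.mpr hi

/-- The map `g` of the statement, i.e. `π_conc(ρ)⁻¹` read in `ℕ`. -/
def piConcInvVal (i : Fin (k + 2)) : ℕ :=
  if i = ρ (Fin.last (k + 1)) then 0 else rankAvoid (ρ 0) (linkPerm ρ i) + 1

theorem piConcInvVal_lt (i : Fin (k + 2)) : piConcInvVal ρ i < k + 2 := by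
  unfold piConcInvVal
  split_ifs with hi
  · omega
  · exact Nat.succ_lt_succ (rankAvoid_lt (linkPerm_ne_apply_zero ρ hi))

theorem piConcInvVal_injective : Function.Injective (piConcInvVal ρ) := by
  intro a b hab
  unfold piConcInvVal at hab
  by_cases ha : a = ρ (Fin.last (k + 1)) <;> by_cases hb : b = ρ (Fin.last (k + 1))
  · rw [ha, hb]
  · simp only [if_pos ha, if_neg hb] at hab; omega
  · simp only [if_neg ha, if_pos hb] at hab; omega
  · simp only [if_neg ha, if_neg hb] at hab
    exact linkPerm_injective ρ <| rankAvoid_injOn (ρ 0) (linkPerm_ne_apply_zero ρ ha)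
      (linkPerm_ne_apply_zero ρ hb) (Nat.succ_injective hab)

theorem piConc_spec_iff (π : Equiv.Perm (Fin (k + 2))) :
    (π 0 = ρ (Fin.last (k + 1)) ∧ ∀ i, i ≠ ρ (Fin.last (k + 1)) →
        (π.symm i : ℕ) = rankAvoid (ρ 0) (linkPerm ρ i) + 1) ↔
      ∀ i, (π.symm i : ℕ) = piConcInvVal ρ i := by
  simp only [piConcInvVal]
  constructor
  · rintro ⟨h0, h⟩ i
    split_ifs with hi
    · rw [hi, ← h0, Equiv.symm_apply_apply, Fin.val_zero]
    · exact h i hi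
  · intro h
    refine ⟨?_, fun i hi => by rw [h i, if_neg hi]⟩
    rw [← Equiv.eq_symm_apply, eq_comm, ← Fin.val_eq_zero_iff, h, if_pos rfl]

end PiConc

/-- For every `k ≥ 2` and permutation `ρ` of `{1,…,k}` (modelled
0-indexed on `Fin (k+2)`): for every `i ≠ ρ(k)` one has `Φ_ρ(i) ≠ ρ(1)`, so
`f_{ρ(1)}(Φ_ρ(i))` is defined; the map `g` sending `ρ(k)` to the first position and
`i ≠ ρ(k)` to `f_{ρ(1)}(Φ_ρ(i)) + 1` is a bijection of `{1,…,k}`; hence there is a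
unique permutation `π_conc(ρ)` with `π_conc(ρ)(1) = ρ(k)` and
`π_conc(ρ)⁻¹(i) = f_{ρ(1)}(Φ_ρ(i)) + 1` for all `i ≠ ρ(k)`. -/
theorem piConc_exists_unique (k : ℕ) (ρ : Equiv.Perm (Fin (k + 2)))
    (g : Fin (k + 2) → ℕ)
    (hg : ∀ i, g i = if i = ρ (Fin.last (k + 1)) then 0
      else rankAvoid (ρ 0) (linkPerm ρ i) + 1) :
    (∀ i, i ≠ ρ (Fin.last (k + 1)) → linkPerm ρ i ≠ ρ 0) ∧
    (Function.Injective g ∧ ∀ m < k + 2, ∃ i, g i = m) ∧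
    (∃! π : Equiv.Perm (Fin (k + 2)),
      π 0 = ρ (Fin.last (k + 1)) ∧
      ∀ i, i ≠ ρ (Fin.last (k + 1)) →
        (π.symm i : ℕ) = rankAvoid (ρ 0) (linkPerm ρ i) + 1) := by
  obtain rfl : g = piConcInvVal ρ := funext hg
  have hinj := piConcInvVal_injective ρ
  have hlt := piConcInvVal_lt ρ
  refine ⟨fun _ => linkPerm_ne_apply_zero ρ, ⟨hinj, exists_eq_of_injective_of_lt hinj hlt⟩, ?_⟩
  rw [existsUnique_congr (piConc_spec_iff ρ)]
  exact Equiv.Perm.existsUnique_symm_val_eq hinj hlt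
end

section
/- For every k ≥ 2, if ρ is the order-reversing permutation of {1,…,k}, i.e. ρ(i) = k + 1 − i for all i, then π_conc(ρ) is the identity permutation. (Hence the lexicographic order of the input strings is always a feasible output order for the concatenated BWT, achieved by presenting the strings in reverse lexicographic rank order.) -/
theorem Fin.sub_one_ne_last {n : ℕ} {i : Fin (n + 1)} (hi : i ≠ 0) : i - 1 ≠ Fin.last n := by
  rwa [Ne, sub_eq_iff_eq_add, Fin.last_add_one]

theorem linkPerm_revPerm {k : ℕ} (i : Fin (k + 2)) : linkPerm Fin.revPerm i = i - 1 := by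
  simp only [linkPerm, Fin.revPerm_symm, Fin.revPerm_apply, Fin.rev_add, Fin.rev_rev]

theorem rankAvoid_last {k : ℕ} {i : Fin (k + 2)} (hi : i ≠ Fin.last (k + 1)) :
    rankAvoid (Fin.last (k + 1)) i = i :=
  if_pos (Fin.lt_last_iff_ne_last.2 hi)

/-- For every `k ≥ 2`, if `ρ` is the order-reversing permutation of
`{1,…,k}` (0-indexed: `ρ(i) = i.rev`), then the identity permutation satisfies the
defining properties of `π_conc(ρ)`, i.e. `π_conc(ρ)` is the identity.  (Hence the
lexicographic order of the input strings is always feasible for the concatenated BWT,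
achieved by presenting the strings in reverse lexicographic rank order.) -/
theorem piConc_of_rev_eq_id (k : ℕ) (ρ : Equiv.Perm (Fin (k + 2)))
    (hρ : ∀ i, ρ i = i.rev) :
    (Equiv.refl (Fin (k + 2))) 0 = ρ (Fin.last (k + 1)) ∧
    ∀ i, i ≠ ρ (Fin.last (k + 1)) →
      (((Equiv.refl (Fin (k + 2))).symm i : ℕ) =
        rankAvoid (ρ 0) (linkPerm ρ i) + 1) := by
  obtain rfl : ρ = Fin.revPerm := Equiv.ext hρ
  simp only [Fin.revPerm_apply, Fin.rev_last, Fin.rev_zero, Equiv.refl_apply, Equiv.refl_symm,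
    linkPerm_revPerm, true_and]
  intro i hi
  rw [rankAvoid_last (Fin.sub_one_ne_last hi), Fin.val_sub_one_of_ne_zero hi]
  exact (Nat.sub_add_cancel (Fin.pos_iff_ne_zero.2 hi)).symm
end

section
/- Let L be a nonempty string over an alphabet, let m be the maximum number of occurrences in L of any single character, and let N = |L| − m. Then runs(L) ≤ 2N + 1; consequently runs(L) ≤ min(|L|, 2N + 1). -/
/-- The number of runs (maximal blocks of consecutive equal characters) of a string. -/
def runs {α : Type*} [DecidableEq α] (L : List α) : ℕ :=
  (L.destutter (· ≠ ·)).length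

lemma runs_aux {α : Type*} [DecidableEq α] :
    ∀ (L : List α) (a : α), runs L + 2 * L.count a ≤
      2 * L.length + (if L.head? = some a then 1 else 0)
  | [], a => by simp [runs]
  | [b], a => by
    simp only [runs, List.destutter_singleton, List.length_singleton, List.count_singleton,
      List.head?_cons]
    by_cases h : b = a <;> simp [h]
  | b :: c :: t, a => by
    have IH := runs_aux (c :: t) a
    have hruns : runs (b :: c :: t) =
        (if b ≠ c then 1 else 0) + runs (c :: t) := by
      unfold runs
      rw [List.destutter_cons_cons]
      by_cases h : b = c
      · simp [h, List.destutter_cons']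
      · simp [h, List.destutter_cons', Nat.add_comm]
    have hcount : (b :: c :: t).count a = (if b = a then 1 else 0) + (c :: t).count a := by
      rw [List.count_cons]
      by_cases h : b = a <;> simp [h] <;> omega
    rw [hruns, hcount]
    simp only [List.head?_cons, Option.some_inj, List.length_cons] at IH ⊢
    split_ifs at IH ⊢ <;> first | omega | simp_all

lemma runs_le_length {α : Type*} [DecidableEq α] (L : List α) : runs L ≤ L.length :=
  (List.destutter_sublist _ L).length_le

/-- For a nonempty string `L`, with `m` the maximum number of occurrences
of any single character and `N = |L| − m`, we have `runs(L) ≤ 2N + 1`; consequently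
`runs(L) ≤ min(|L|, 2N + 1)`. -/
theorem runs_le_two_N_add_one {α : Type*} [DecidableEq α] (L : List α) (hL : L ≠ [])
    (m N : ℕ) (hm : m = L.toFinset.sup fun a => L.count a) (hN : N = L.length - m) :
    runs L ≤ 2 * N + 1 ∧ runs L ≤ min L.length (2 * N + 1) := by
  have hne : L.toFinset.Nonempty := by
    simpa [List.toFinset_nonempty_iff] using hL
  obtain ⟨a, _, ha⟩ := Finset.exists_mem_eq_sup _ hne (fun a => L.count a)
  have hcount : L.count a ≤ L.length := L.count_le_length
  have haux := runs_aux L a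
  have hle : runs L ≤ 2 * N + 1 := by
    have : (if L.head? = some a then 1 else 0) ≤ 1 := by split <;> omega
    omega
  exact ⟨hle, le_min (runs_le_length L) hle⟩
end

section
/- Let L be a nonempty string over an alphabet, let m be the maximum number of occurrences in L of any single character, and let N = |L| − m. Then the maximum of runs(L') over all strings L' that are rearrangements of L (i.e., contain the same characters with the same multiplicities) equals |L| if m − 1 ≤ N, and equals 2N + 1 if m − 1 > N. Equivalently, this maximum equals min(|L|, 2N + 1), and it is attained by some rearrangement of L. -/
open List

section aux
variable {α : Type*} [DecidableEq α]

lemma countP_ne_add_count (a : α) (l : List α) :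
    l.countP (fun x => x ≠ a) + l.count a = l.length := by
  induction l with
  | nil => simp
  | cons x t ih =>
    by_cases h : x = a
    · subst h
      rw [List.countP_cons, List.count_cons_self]
      simp only [List.length_cons]
      simp at ih ⊢; omega
    · rw [List.countP_cons, List.count_cons_of_ne h]
      simp only [List.length_cons]
      simp [h] at ih ⊢; omega

lemma count_add_count_le {a b : α} (h : a ≠ b) (l : List α) :
    l.count a + l.count b ≤ l.length := by
  induction l with
  | nil => simp
  | cons x t ih =>
    simp only [List.length_cons]
    rcases eq_or_ne x a with rfl | hxa
    · rw [List.count_cons_self, List.count_cons_of_ne h]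
      omega
    · rcases eq_or_ne x b with rfl | hxb
      · rw [List.count_cons_of_ne (Ne.symm h), List.count_cons_self]
        omega
      · rw [List.count_cons_of_ne hxa, List.count_cons_of_ne hxb]
        omega

lemma two_count_le_of_chain' (a : α) : ∀ l : List α, l.Chain' (· ≠ ·) →
    2 * l.count a ≤ l.length + 1
  | [], _ => by simp
  | [x], _ => by
    rcases eq_or_ne x a with rfl | h
    · simp
    · rw [List.count_cons_of_ne h]; simp
  | x :: y :: t, h => by
    have h1 : x ≠ y := (List.isChain_cons_cons.mp h).1
    have h2 : (y :: t).Chain' (· ≠ ·) := (List.isChain_cons_cons.mp h).2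
    have ht : t.Chain' (· ≠ ·) := h2.tail
    by_cases hx : x = a
    · have hy : y ≠ a := fun hy => h1 (hx.trans hy.symm)
      have := two_count_le_of_chain' a t ht
      subst hx
      rw [List.count_cons_self, List.count_cons_of_ne hy]
      simp only [List.length_cons]
      omega
    · have := two_count_le_of_chain' a (y :: t) h2
      rw [List.count_cons_of_ne hx]
      simp only [List.length_cons] at *
      omega

lemma runs_le_two_countP (a : α) (l : List α) :
    runs l ≤ 2 * l.countP (fun x => x ≠ a) + 1 := by
  have hs := l.destutter_sublist (· ≠ ·)
  have hc := List.isChain_destutter (R := (· ≠ ·)) (l := l)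
  have h1 := two_count_le_of_chain' a _ hc
  have h2 := countP_ne_add_count a (l.destutter (· ≠ ·))
  have h3 : (l.destutter (· ≠ ·)).countP (fun x => x ≠ a) ≤
      l.countP (fun x => x ≠ a) := hs.countP_le
  unfold runs
  omega

/-- Greedy lemma: if no character occupies more than half (rounded up), there is a
rearrangement with no two adjacent characters equal, avoiding a forbidden first char. -/
lemma exists_chain_arrangement : ∀ n : ℕ, ∀ (l : List α) (f : Option α),
    l.length = n →
    (∀ c : α, 2 * l.count c ≤ n + 1) →
    (∀ x ∈ f, 2 * l.count x ≤ n) →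
    ∃ l' : List α, l'.Perm l ∧ l'.Chain' (· ≠ ·) ∧ ∀ h ∈ l'.head?, some h ≠ f := by
  intro n
  induction n using Nat.strong_induction_on with
  | _ n ih =>
    intro l f hlen hall hf
    rcases l.eq_nil_or_concat with rfl | hne
    · exact ⟨[], List.Perm.refl _, List.isChain_nil, by simp⟩
    · have hne : l ≠ [] := by rcases hne with ⟨a, b, rfl⟩; simp
      have hn1 : 1 ≤ n := by
        rw [← hlen]; exact List.length_pos_iff.mpr hne
      -- choose the element `a` to put first
      have key : ∃ a : α, a ∈ l ∧ some a ≠ f ∧ ∀ c : α, c ≠ a → 2 * l.count c ≤ n := by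
        by_cases hex : ∃ c, 2 * l.count c = n + 1
        · obtain ⟨a, ha⟩ := hex
          have haM : a ∈ l := by
            rw [← List.count_pos_iff]; omega
          refine ⟨a, haM, ?_, ?_⟩
          · intro hfa
            have := hf a (by rw [← hfa]; rfl)
            omega
          · intro c hca
            by_contra hc
            have h1 := hall c
            have h2 : 2 * l.count c = n + 1 := by omega
            have := count_add_count_le hca l
            omega
        · push_neg at hex
          have hall' : ∀ c : α, 2 * l.count c ≤ n := by
            intro c
            have := hall c
            have := hex c
            omega
          match f with
          | none =>
            obtain ⟨a, t, rfl⟩ := List.exists_cons_of_ne_nil hne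
            exact ⟨a, by simp, by simp, fun c _ => hall' c⟩
          | some x =>
            have : ∃ a ∈ l, a ≠ x := by
              by_contra hno
              push_neg at hno
              have : l.count x = n := by
                rw [← hlen]
                rw [List.count_eq_length]
                intro y hy; exact (hno y hy).symm
              have := hf x rfl
              omega
            obtain ⟨a, haM, hax⟩ := this
            exact ⟨a, haM, by simpa using hax, fun c _ => hall' c⟩
      obtain ⟨a, haM, haf, hsmall⟩ := key
      have hperm : l.Perm (a :: l.erase a) := List.perm_cons_erase haM
      have hlen2 : (l.erase a).length = n - 1 := by
        rw [List.length_erase_of_mem haM, hlen]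
      have hcount2 : ∀ c : α, (l.erase a).count c =
          l.count c - if a = c then 1 else 0 := fun c => by
        simpa using List.count_erase (a := c) (b := a) (l := l)
      have hca : 1 ≤ l.count a := List.count_pos_iff.mpr haM
      obtain ⟨l'', hp'', hc'', hh''⟩ := ih (n - 1) (by omega) (l.erase a) (some a)
        hlen2
        (by
          intro c
          rw [hcount2 c]
          rcases eq_or_ne a c with rfl | h
          · rw [if_pos rfl]
            have := hall a; omega
          · rw [if_neg h]
            have := hsmall c (Ne.symm h); omega)
        (by
          intro x hx
          simp only [Option.mem_def, Option.some.injEq] at hx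
          subst hx
          rw [hcount2 a, if_pos rfl]
          have := hall a; omega)
      refine ⟨a :: l'', ?_, ?_, ?_⟩
      · exact (hp''.cons a).trans hperm.symm
      · unfold List.Chain'; rw [List.isChain_cons]
        refine ⟨?_, hc''⟩
        intro y hy
        have := hh'' y hy
        simp only [ne_eq, Option.some.injEq] at this
        exact fun h => this h.symm
      · intro h hh
        simp only [List.head?_cons, Option.mem_def, Option.some.injEq] at hh
        subst hh; exact haf

/-- `pat a [y₁,…,y_N] = [y₁, a, y₂, a, …, y_N, a]`. -/
def pat (a : α) : List α → List α
  | [] => []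
  | y :: t => y :: a :: pat a t

lemma pat_length (a : α) : ∀ ys : List α, (pat a ys).length = 2 * ys.length
  | [] => rfl
  | y :: t => by simp [pat, pat_length a t]; omega

lemma pat_perm (a : α) : ∀ ys : List α,
    (pat a ys).Perm (ys ++ List.replicate ys.length a)
  | [] => by simp [pat]
  | y :: t => by
    simp only [pat, List.length_cons, List.cons_append]
    refine List.Perm.cons y ?_
    refine ((pat_perm a t).cons a).trans ?_
    have : List.replicate (t.length + 1) a = a :: List.replicate t.length a := rfl
    rw [this]
    exact List.perm_middle.symm

lemma pat_chain' (a : α) : ∀ ys : List α, (∀ y ∈ ys, y ≠ a) →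
    (a :: pat a ys).Chain' (· ≠ ·)
  | [], _ => by simp [pat]; exact List.isChain_singleton a
  | y :: t, h => by
    have hy : y ≠ a := h y (by simp)
    have ih := pat_chain' a t (fun z hz => h z (by simp [hz]))
    simp only [pat]
    unfold List.Chain'; rw [List.isChain_cons_cons]
    exact ⟨fun hh => hy hh.symm, List.isChain_cons_cons.mpr ⟨hy, ih⟩⟩

lemma destutter'_replicate_append (a : α) : ∀ (k : ℕ) (rest : List α),
    (List.replicate k a ++ rest).destutter' (· ≠ ·) a = rest.destutter' (· ≠ ·) a
  | 0, rest => rfl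
  | k + 1, rest => by
    rw [List.replicate_succ, List.cons_append,
      List.destutter'_cons_neg _ (by simp : ¬ a ≠ a)]
    exact destutter'_replicate_append a k rest

lemma runs_construction (a : α) (k : ℕ) (ys : List α) (hys : ∀ y ∈ ys, y ≠ a) :
    runs (List.replicate k a ++ a :: pat a ys) = 2 * ys.length + 1 := by
  have hW : List.replicate k a ++ a :: pat a ys
      = a :: (List.replicate k a ++ pat a ys) := by
    induction k with
    | zero => rfl
    | succ k ih => simp [List.replicate_succ, List.cons_append, ih]
  rw [hW]
  unfold runs
  rw [List.destutter_cons', destutter'_replicate_append]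
  have hchain : (pat a ys).Chain (· ≠ ·) a := pat_chain' a ys hys
  rw [List.destutter'_of_isChain_cons (R := (· ≠ ·)) (a := a) (l := pat a ys) (pat_chain' a ys hys), List.length_cons, pat_length]

end aux

/-- For a nonempty string `L`, with `m` the maximum multiplicity of a
character and `N = |L| − m`, the maximum of `runs(L')` over all rearrangements `L'` of
`L` equals `min(|L|, 2N+1)` and is attained; moreover this value equals `|L|` when
`m − 1 ≤ N` and equals `2N + 1` when `m − 1 > N`. -/
theorem max_runs_over_rearrangements {α : Type*} [DecidableEq α] (L : List α)
    (hL : L ≠ []) (m N : ℕ)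
    (hm : m = L.toFinset.sup fun a => L.count a) (hN : N = L.length - m) :
    IsGreatest {r : ℕ | ∃ L' : List α, L'.Perm L ∧ runs L' = r}
      (min L.length (2 * N + 1)) ∧
    (m - 1 ≤ N → min L.length (2 * N + 1) = L.length) ∧
    (N < m - 1 → min L.length (2 * N + 1) = 2 * N + 1) := by
  have hn1 : 1 ≤ L.length := List.length_pos_iff.mpr hL
  have htne : L.toFinset.Nonempty := by
    obtain ⟨x, t, rfl⟩ := List.exists_cons_of_ne_nil hL
    exact ⟨x, by simp⟩
  obtain ⟨a, haT, hma⟩ := Finset.exists_mem_eq_sup L.toFinset htne (fun a => L.count a)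
  have haL : a ∈ L := List.mem_toFinset.mp haT
  have hmcount : L.count a = m := by rw [hm, hma]
  have hm1 : 1 ≤ m := hmcount ▸ List.count_pos_iff.mpr haL
  have hmn : m ≤ L.length := hmcount ▸ List.count_le_length
  have hcount_le : ∀ c : α, L.count c ≤ m := by
    intro c
    by_cases hc : c ∈ L.toFinset
    · rw [hm]; exact Finset.le_sup (f := fun a => L.count a) hc
    · have : L.count c = 0 := List.count_eq_zero.mpr
        (fun h => hc (List.mem_toFinset.mpr h))
      omega
  have hub : ∀ r ∈ {r : ℕ | ∃ L' : List α, L'.Perm L ∧ runs L' = r},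
      r ≤ min L.length (2 * N + 1) := by
    rintro r ⟨L', hp, rfl⟩
    refine le_min ?_ ?_
    · calc runs L' ≤ L'.length := (L'.destutter_sublist _).length_le
        _ = L.length := hp.length_eq
    · have h1 := runs_le_two_countP a L'
      have h2 := countP_ne_add_count a L'
      have h3 : L'.count a = m := by rw [hp.count_eq, hmcount]
      have h4 : L'.length = L.length := hp.length_eq
      omega
  have hmem : min L.length (2 * N + 1) ∈
      {r : ℕ | ∃ L' : List α, L'.Perm L ∧ runs L' = r} := by
    by_cases hcase : 2 * m ≤ L.length + 1
    · obtain ⟨l', hp, hc, -⟩ := exists_chain_arrangement L.length L none rfl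
        (fun c => by have := hcount_le c; omega) (by simp)
      refine ⟨l', hp, ?_⟩
      have hr : runs l' = l'.length := by
        unfold runs; rw [List.destutter_of_isChain (R := (· ≠ ·)) (l := l') hc]
      rw [hr, hp.length_eq]
      omega
    · set ys : List α := L.filter (fun y => y ≠ a) with hysdef
      have hysne : ∀ y ∈ ys, y ≠ a := fun y hy => by
        simpa using (List.mem_filter.mp hy).2
      have hyslen : ys.length = N := by
        have h1 : ys.length = L.countP (fun x => x ≠ a) :=
          List.countP_eq_length_filter.symm
        have h2 := countP_ne_add_count a L
        omega
      have hysca : ys.count a = 0 := List.count_eq_zero.mpr (fun h => hysne a h rfl)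
      set W : List α := List.replicate (m - N - 1) a ++ a :: pat a ys with hWdef
      have hrw : runs W = 2 * N + 1 := by
        rw [hWdef, runs_construction a _ ys hysne, hyslen]
      have hWperm : W.Perm L := by
        rw [List.perm_iff_count]
        intro c
        have hpp : (pat a ys).count c = (ys ++ List.replicate ys.length a).count c :=
          (pat_perm a ys).count_eq c
        rw [hWdef, List.count_append, List.count_replicate]
        rcases eq_or_ne c a with rfl | hca
        · rw [List.count_cons_self, hpp, List.count_append,
            List.count_replicate_self, hysca, hyslen]
          simp only [beq_self_eq_true, if_true]
          omega
        · rw [List.count_cons_of_ne (Ne.symm hca), hpp, List.count_append, List.count_replicate]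
          rw [if_neg (by simpa using Ne.symm hca), if_neg (by simpa using Ne.symm hca)]
          have : ys.count c = L.count c := by
            rw [hysdef]
            exact List.count_filter (by simpa using hca)
          omega
      exact ⟨W, hWperm, by rw [hrw]; omega⟩
  exact ⟨⟨hmem, hub⟩, fun h => by omega, fun h => by omega⟩
end

section
/- Let L and L' be strings of the same length n over an alphabet, and let I_1,…,I_c be pairwise disjoint intervals of positions in {1,…,n} such that: (i) L and L' agree at every position outside I_1 ∪ … ∪ I_c; (ii) for each t, the restriction of L to I_t is a rearrangement of the restriction of L' to I_t (same characters with the same multiplicities); and (iii) for each t, the restriction of L to I_t is grouped, i.e., within I_t all occurrences of each character occupy consecutive positions. Then runs(L) ≤ runs(L') + 2c. -/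
set_option linter.unusedSectionVars false

/-- A string is grouped if all occurrences of each character occupy consecutive
positions, i.e. between any two occurrences of a character `a` only `a`'s occur. -/
def Grouped {α : Type*} (L : List α) : Prop :=
  ∀ (l₁ l₂ l₃ : List α) (a : α), L = l₁ ++ a :: (l₂ ++ a :: l₃) → ∀ b ∈ l₂, b = a

/-- The restriction of a string to the interval of positions `[b,e]` (0-indexed). -/
def restr {α : Type*} (L : List α) (b e : ℕ) : List α := (L.drop b).take (e + 1 - b)

namespace RunsAux
variable {α : Type*} [DecidableEq α]

local notation "d'" => List.destutter' (α := α) (· ≠ ·)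
local notation "dd" => List.destutter (α := α) (· ≠ ·)

lemma d'_nil (a : α) : d' a [] = [a] := rfl

lemma d'_cons_pos {a h : α} (hne : a ≠ h) (l : List α) :
    d' a (h :: l) = a :: d' h l := by
  rw [List.destutter', if_pos hne]

lemma d'_cons_neg {a h : α} (hne : a = h) (l : List α) :
    d' a (h :: l) = d' a l := by
  rw [List.destutter', if_neg (by simp [hne])]

lemma dd_cons (a : α) (l : List α) : dd (a :: l) = d' a l := rfl

lemma runs_cons (a : α) (l : List α) : runs (a :: l) = (d' a l).length := rfl

lemma len_d'_le (l : List α) : ∀ a b : α, (d' a l).length ≤ (d' b l).length + 1 := by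
  cases l with
  | nil => intro a b; simp [d'_nil]
  | cons h l =>
    intro a b
    by_cases hah : a = h <;> by_cases hbh : b = h
    · subst hah; subst hbh; rw [d'_cons_neg rfl]; omega
    · subst hah; rw [d'_cons_neg rfl, d'_cons_pos hbh]; rw [List.length_cons]; omega
    · subst hbh; rw [d'_cons_pos hah, d'_cons_neg rfl]; simp
    · rw [d'_cons_pos hah, d'_cons_pos hbh]; simp

lemma len_d'_le_one_add (a : α) (l : List α) : (d' a l).length ≤ 1 + (dd l).length := by
  cases l with
  | nil => simp [d'_nil, List.destutter]
  | cons c l =>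
    rw [dd_cons]
    by_cases hac : a = c
    · rw [d'_cons_neg hac]
      have := len_d'_le l a c; omega
    · rw [d'_cons_pos hac, List.length_cons]; omega

lemma dd_len_le_d' (a : α) (l : List α) : (dd l).length ≤ (d' a l).length := by
  cases l with
  | nil => simp [d'_nil, List.destutter]
  | cons c l =>
    rw [dd_cons]
    by_cases hac : a = c
    · rw [d'_cons_neg hac]; subst hac; omega
    · rw [d'_cons_pos hac, List.length_cons]; omega

lemma d'_append_le (l l' : List α) : ∀ a : α,
    (d' a (l ++ l')).length ≤ (d' a l).length + (dd l').length := by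
  induction l with
  | nil =>
    intro a
    rw [List.nil_append, d'_nil, List.length_singleton]
    have := len_d'_le_one_add a l'; omega
  | cons h l ih =>
    intro a
    rw [List.cons_append]
    by_cases hah : a = h
    · rw [d'_cons_neg hah, d'_cons_neg hah]; exact ih a
    · rw [d'_cons_pos hah, d'_cons_pos hah, List.length_cons, List.length_cons]
      have := ih h; omega

lemma le_d'_append (l l' : List α) : ∀ a : α,
    (d' a l).length + (dd l').length ≤ (d' a (l ++ l')).length + 1 := by
  induction l with
  | nil =>
    intro a
    rw [List.nil_append, d'_nil, List.length_singleton]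
    have := dd_len_le_d' a l'; omega
  | cons h l ih =>
    intro a
    rw [List.cons_append]
    by_cases hah : a = h
    · rw [d'_cons_neg hah, d'_cons_neg hah]; exact ih a
    · rw [d'_cons_pos hah, d'_cons_pos hah, List.length_cons, List.length_cons]
      have := ih h; omega

lemma runs_append_le (X Y : List α) : runs (X ++ Y) ≤ runs X + runs Y := by
  cases X with
  | nil => simp
  | cons a X =>
    rw [List.cons_append, runs_cons, runs_cons]
    exact d'_append_le X Y a

lemma le_runs_append (X Y : List α) : runs X + runs Y ≤ runs (X ++ Y) + 1 := by
  cases X with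
  | nil => simp [runs]
  | cons a X =>
    rw [List.cons_append, runs_cons, runs_cons]
    exact le_d'_append X Y a

lemma mem_d' (l : List α) : ∀ (b a : α), a ∈ b :: l → a ∈ d' b l := by
  induction l with
  | nil => intro b a h; rw [d'_nil]; simpa using h
  | cons c l ih =>
    intro b a h
    by_cases hbc : b = c
    · rw [d'_cons_neg hbc]
      subst hbc
      apply ih b a
      rcases List.mem_cons.1 h with rfl | h2
      · exact List.mem_cons_self
      · exact h2
    · rw [d'_cons_pos hbc]
      rcases List.mem_cons.1 h with rfl | h2
      · exact List.mem_cons_self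
      · exact List.mem_cons_of_mem _ (ih c a h2)

lemma toFinset_card_le_runs (N : List α) : N.toFinset.card ≤ runs N := by
  cases N with
  | nil => simp [runs]
  | cons a l =>
    rw [runs_cons]
    calc (a :: l).toFinset.card ≤ (d' a l).toFinset.card := by
          apply Finset.card_le_card
          intro x hx
          rw [List.mem_toFinset] at *
          exact mem_d' l a x hx
      _ ≤ (d' a l).length := List.toFinset_card_le _

lemma grouped_tail {x : α} {l : List α} (h : Grouped (x :: l)) : Grouped l := by
  intro l₁ l₂ l₃ a hl
  exact h (x :: l₁) l₂ l₃ a (by rw [hl]; rfl)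

lemma grouped_nodup (l : List α) : ∀ a : α, Grouped (a :: l) → (d' a l).Nodup := by
  induction l with
  | nil => intro a _; simp [d'_nil]
  | cons c l ih =>
    intro a hg
    by_cases hac : a = c
    · rw [d'_cons_neg hac]
      subst hac
      exact ih a (grouped_tail hg)
    · rw [d'_cons_pos hac, List.nodup_cons]
      refine ⟨?_, ih c (grouped_tail hg)⟩
      intro hmem
      have hsub := (List.destutter'_sublist l (· ≠ ·) c).subset hmem
      rcases List.mem_cons.1 hsub with rfl | hmem2
      · exact hac rfl
      · obtain ⟨u, v, rfl⟩ := List.append_of_mem hmem2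
        have := hg [] (c :: u) v a (by simp) c (List.mem_cons_self)
        exact hac this.symm

lemma runs_le_toFinset_card (M : List α) (h : Grouped M) : runs M ≤ M.toFinset.card := by
  cases M with
  | nil => simp [runs]
  | cons a l =>
    rw [runs_cons, ← List.toFinset_card_of_nodup (grouped_nodup l a h)]
    apply Finset.card_le_card
    intro x hx
    rw [List.mem_toFinset] at *
    exact (List.destutter'_sublist l (· ≠ ·) a).subset hx

lemma key (A M M' B : List α) (hperm : M.Perm M') (hg : Grouped M) :
    runs (A ++ M ++ B) ≤ runs (A ++ M' ++ B) + 2 := by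
  have h1 : runs (A ++ M ++ B) ≤ runs A + runs M + runs B := by
    have ha := runs_append_le (A ++ M) B
    have hb := runs_append_le A M
    omega
  have h2 : runs M ≤ runs M' := by
    have he : M.toFinset = M'.toFinset := by
      ext x; simp [List.mem_toFinset, hperm.mem_iff]
    calc runs M ≤ M.toFinset.card := runs_le_toFinset_card M hg
      _ = M'.toFinset.card := by rw [he]
      _ ≤ runs M' := toFinset_card_le_runs M'
  have ha := le_runs_append A M'
  have hb := le_runs_append (A ++ M') B
  omega

lemma restr_getElem? (X : List α) (b e i : ℕ) :
    (restr X b e)[i]? = if i < e + 1 - b then X[b + i]? else none := by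
  simp [restr, List.getElem?_take, List.getElem?_drop]

end RunsAux

open RunsAux in
/-- Let `L`, `L'` be strings of the same length `n` and let
`[b_1,e_1],…,[b_c,e_c]` be pairwise disjoint intervals of positions such that
(i) `L` and `L'` agree at every position outside the intervals,
(ii) on each interval the restriction of `L` is a rearrangement of that of `L'`, and
(iii) on each interval the restriction of `L` is grouped.
Then `runs(L) ≤ runs(L') + 2c`. -/
theorem runs_le_of_grouped_on_intervals {α : Type*} [DecidableEq α]
    (n : ℕ) (L L' : List α) (hLn : L.length = n) (hL'n : L'.length = n)
    (c : ℕ) (b e : Fin c → ℕ)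
    (hbe : ∀ t, b t ≤ e t) (hen : ∀ t, e t < n)
    (hdisj : ∀ s t, s ≠ t → Disjoint (Finset.Icc (b s) (e s)) (Finset.Icc (b t) (e t)))
    (hout : ∀ p < n, (∀ t, ¬ (b t ≤ p ∧ p ≤ e t)) → L[p]? = L'[p]?)
    (hperm : ∀ t, (restr L (b t) (e t)).Perm (restr L' (b t) (e t)))
    (hgrp : ∀ t, Grouped (restr L (b t) (e t))) :
    runs L ≤ runs L' + 2 * c := by
  induction c generalizing L with
  | zero =>
    have hL : L = L' := List.ext_getElem? (fun p => by
      by_cases hp : p < n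
      · exact hout p hp (fun t => t.elim0)
      · rw [List.getElem?_eq_none (by omega), List.getElem?_eq_none (by omega)])
    simp [hL]
  | succ c ih =>
    set t0 : Fin (c + 1) := Fin.last c with ht0
    have hb0e0 : b t0 ≤ e t0 := hbe t0
    have he0n : e t0 < n := hen t0
    set A := L.take (b t0) with hA
    set M := restr L (b t0) (e t0) with hM
    set M' := restr L' (b t0) (e t0) with hM'
    set B := L.drop (e t0 + 1) with hB
    have hAlen : A.length = b t0 := by
      rw [hA, List.length_take]; omega
    have hM'len : M'.length = e t0 + 1 - b t0 := by
      rw [hM', restr, List.length_take, List.length_drop]; omega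
    have hdecomp : L = A ++ M ++ B := by
      have h1 : (L.drop (b t0)).drop (e t0 + 1 - b t0) = L.drop (e t0 + 1) := by
        rw [List.drop_drop]; congr 1; omega
      rw [hA, hM, hB, restr, List.append_assoc, ← h1, List.take_append_drop,
        List.take_append_drop]
    set L'' := A ++ M' ++ B with hL''
    have hP : ∀ p, L''[p]? = if b t0 ≤ p ∧ p ≤ e t0 then L'[p]? else L[p]? := by
      intro p
      rw [hL'', List.append_assoc, List.getElem?_append, hAlen]
      by_cases h1 : p < b t0
      · rw [if_pos h1, if_neg (by omega), hA, List.getElem?_take, if_pos h1]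
      · rw [if_neg h1, List.getElem?_append, hM'len]
        by_cases h2 : p ≤ e t0
        · rw [if_pos (by omega), if_pos ⟨by omega, h2⟩, hM', restr,
            List.getElem?_take, if_pos (by omega), List.getElem?_drop]
          congr 1; omega
        · rw [if_neg (by omega), if_neg (by omega), hB, List.getElem?_drop]
          congr 1; omega
    have hL''len : L''.length = n := by
      rw [hL'']
      simp only [List.length_append, hAlen, hM'len, hB, List.length_drop, hLn]
      omega
    have hrestr : ∀ s : Fin c, restr L'' (b s.castSucc) (e s.castSucc)
        = restr L (b s.castSucc) (e s.castSucc) := by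
      intro s
      apply List.ext_getElem?
      intro i
      rw [restr_getElem?, restr_getElem?]
      by_cases hi : i < e s.castSucc + 1 - b s.castSucc
      · rw [if_pos hi, if_pos hi, hP, if_neg ?_]
        rintro ⟨h1, h2⟩
        have hmem1 : b s.castSucc + i ∈ Finset.Icc (b s.castSucc) (e s.castSucc) :=
          Finset.mem_Icc.2 ⟨by omega, by omega⟩
        have hmem2 : b s.castSucc + i ∈ Finset.Icc (b t0) (e t0) :=
          Finset.mem_Icc.2 ⟨h1, h2⟩
        exact Finset.disjoint_left.1
          (hdisj s.castSucc t0 (Fin.castSucc_lt_last s).ne) hmem1 hmem2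
      · rw [if_neg hi, if_neg hi]
    have hout'' : ∀ p < n, (∀ t : Fin c, ¬ (b t.castSucc ≤ p ∧ p ≤ e t.castSucc)) →
        L''[p]? = L'[p]? := by
      intro p hp h
      rw [hP]
      by_cases hpin : b t0 ≤ p ∧ p ≤ e t0
      · rw [if_pos hpin]
      · rw [if_neg hpin]
        apply hout p hp
        intro t
        rcases Fin.eq_castSucc_or_eq_last t with ⟨s, rfl⟩ | rfl
        · exact h s
        · exact hpin
    have hmain := ih L'' hL''len (fun s => b s.castSucc) (fun s => e s.castSucc)
      (fun s => hbe _) (fun s => hen _)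
      (fun s t hst => hdisj _ _ (fun hc => hst (Fin.castSucc_injective c hc)))
      hout''
      (fun s => by rw [hrestr s]; exact hperm _)
      (fun s => by rw [hrestr s]; exact hgrp _)
    calc runs L = runs (A ++ M ++ B) := by rw [← hdecomp]
      _ ≤ runs (A ++ M' ++ B) + 2 := key A M M' B (hperm t0) (hgrp t0)
      _ = runs L'' + 2 := by rw [hL'']
      _ ≤ (runs L' + 2 * c) + 2 := by omega
      _ = runs L' + 2 * (c + 1) := by ring
end
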